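/- (Self-similar Harnack) Let N ≥ 3 be an odd integer, σ ∈ (2/N², 1), and k ≥ 0 an integer. Suppose w : ℝ² → [0,∞) is C² with Δw = f, where |f| ≤ 1 everywhere, and for every x ∈ ℝ² and every i ∈ {0,...,k}, (1/N^{2i})∫_{Q_{N^i}(x)} |f| ≤ σ^i, where Q_r(x) is the axis-parallel square of side r centered at x. Then there is a universal constant C (independent of N, σ, k) such that for all x ∈ ℝ² and y ∈ Q_{N^k}(x), w(y) ≤ C(w(x) + N^{2k}σ^k ln N). -/

import Mathlib

/-!
Let `Ψ_z(s) = ∫ ∂ᵣw(z + s e_θ) dθ` be the derivative of the integral of `w` over the circle of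
radius `s` about `z`. By the divergence theorem `s Ψ_z(s) = ∫_{B(z,s)} Δw`, so `|Ψ_z(s)| ≤ π s`,
and when `s ≤ 2N^i` the disc lies in sixteen squares of side `N^i`, giving
`|Ψ_z(s)| ≤ 16 (N²σ)^i / s`. Integrating over the shells `2N^(i-1) < s ≤ 2N^i`, each contributes
`O((N²σ)^i log N)`, a geometric series since `N²σ > 2`; so `∫₀^{2N^k} |Ψ_z| = O((N²σ)^k log N)`.
Hence the mean of `w` over `B(z, R)`, `R ≤ 2N^k`, is `w(z)` up to that error, and as `w ≥ 0` and
`B(y, N^k) ⊆ B(x, 2N^k)`, the mean over `B(y, N^k)` is at most four times that over `B(x, 2N^k)`.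
-/

open MeasureTheory

noncomputable def pdx (f : ℝ × ℝ → ℝ) (p : ℝ × ℝ) : ℝ := fderiv ℝ f p (1, 0)
noncomputable def pdy (f : ℝ × ℝ → ℝ) (p : ℝ × ℝ) : ℝ := fderiv ℝ f p (0, 1)
noncomputable def lap (f : ℝ × ℝ → ℝ) (p : ℝ × ℝ) : ℝ :=
  pdx (pdx f) p + pdy (pdy f) p

/-- The axis-parallel square of side `r` centered at `x`. -/
def sqQ (r : ℝ) (x : ℝ × ℝ) : Set (ℝ × ℝ) :=
  Set.Icc (x.1 - r / 2) (x.1 + r / 2) ×ˢ Set.Icc (x.2 - r / 2) (x.2 + r / 2)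

open Real Set

noncomputable def circleDir (θ : ℝ) : ℝ × ℝ := (cos θ, sin θ)

noncomputable def circleTangent (θ : ℝ) : ℝ × ℝ := (-sin θ, cos θ)

/-- The open Euclidean disc (`Metric.ball` would be a square: the norm of `ℝ × ℝ` is the sup
norm). -/
def disc (z : ℝ × ℝ) (r : ℝ) : Set (ℝ × ℝ) := {p | (p.1 - z.1) ^ 2 + (p.2 - z.2) ^ 2 < r ^ 2}

/-- The derivative in `s` of `∫ θ in -π..π, w (z + s • circleDir θ)`
(`integral_circle_eq_add_integral_circleFlux`). -/
noncomputable def circleFlux (w : ℝ × ℝ → ℝ) (z : ℝ × ℝ) (s : ℝ) : ℝ :=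
  ∫ θ in (-π)..π, fderiv ℝ w (z + s • circleDir θ) (circleDir θ)

@[fun_prop]
lemma continuous_circleDir : Continuous circleDir := by unfold circleDir; fun_prop

@[fun_prop]
lemma continuous_circleTangent : Continuous circleTangent := by unfold circleTangent; fun_prop

lemma circleDir_eq (θ : ℝ) :
    circleDir θ = cos θ • ((1 : ℝ), (0 : ℝ)) + sin θ • ((0 : ℝ), (1 : ℝ)) := by
  simp [circleDir]

lemma circleTangent_eq (θ : ℝ) :
    circleTangent θ = (-sin θ) • ((1 : ℝ), (0 : ℝ)) + cos θ • ((0 : ℝ), (1 : ℝ)) := by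
  simp [circleTangent]

lemma setIntegral_union_le {α : Type*} [MeasurableSpace α] {μ : Measure α} {g : α → ℝ}
    (hg : 0 ≤ g) {s t : Set α} (hs : IntegrableOn g s μ) (ht : IntegrableOn g t μ) :
    ∫ p in s ∪ t, g p ∂μ ≤ ∫ p in s, g p ∂μ + ∫ p in t, g p ∂μ := by
  rw [← integral_add_measure hs ht]
  exact integral_mono_measure (Measure.restrict_union_le s t) (ae_of_all _ hg)
    (Integrable.add_measure hs ht)

lemma intervalIntegral_integral_swap {G : ℝ × ℝ → ℝ} (hG : Continuous G) {a b c d : ℝ}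
    (hab : a ≤ b) (hcd : c ≤ d) :
    ∫ x in a..b, ∫ y in c..d, G (x, y) = ∫ y in c..d, ∫ x in a..b, G (x, y) := by
  simp only [intervalIntegral.integral_of_le hab, intervalIntegral.integral_of_le hcd]
  refine integral_integral_swap (f := fun x y => G (x, y)) ?_
  rw [Measure.prod_restrict, ← Measure.volume_eq_prod]
  refine (hG.integrableOn_Icc (a := (a, c)) (b := (b, d))).mono_set ?_
  rw [← Icc_prod_Icc]
  exact prod_mono Ioc_subset_Icc_self Ioc_subset_Icc_self

lemma intervalIntegral_le_mul_log {F : ℝ → ℝ} (hF : Continuous F) {a N C : ℝ} (ha : 0 < a)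
    (hN : 1 ≤ N) (h : ∀ s ∈ Ioo a (a * N), F s ≤ C / s) : ∫ s in a..a * N, F s ≤ C * log N := by
  have hle : a ≤ a * N := le_mul_of_one_le_right ha.le hN
  have h0 : ∀ s ∈ uIcc a (a * N), s ≠ 0 := by
    rw [uIcc_of_le hle]
    exact fun s hs => (ha.trans_le hs.1).ne'
  calc ∫ s in a..a * N, F s ≤ ∫ s in a..a * N, C * (1 / s) :=
        intervalIntegral.integral_mono_on_of_le_Ioo hle (hF.intervalIntegrable _ _)
          ((intervalIntegral.intervalIntegrable_one_div h0 continuousOn_id).const_mul _)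
          fun s hs => (h s hs).trans_eq (mul_one_div C s).symm
    _ = C * log N := by
        rw [intervalIntegral.integral_const_mul, integral_one_div fun h => h0 0 h rfl,
          mul_div_cancel_left₀ _ ha.ne']

lemma intervalIntegral_le_of_scale_bounds {F : ℝ → ℝ} (hF : Continuous F) {ρ N A b c : ℝ}
    (hρ : 0 < ρ) (hN : 1 ≤ N) (hA : 2 ≤ A) (hc : 0 ≤ c) (k : ℕ)
    (h₀ : ∀ s ∈ Ioo 0 ρ, F s ≤ b * s)
    (hscale : ∀ i ≤ k, ∀ s ∈ Ioo 0 (ρ * N ^ i), F s ≤ c * A ^ i / s) :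
    ∫ s in (0)..ρ * N ^ k, F s ≤ b * ρ ^ 2 / 2 + 2 * c * A ^ k * log N := by
  have hN₀ : 0 < N := by linarith
  induction k with
  | zero =>
    calc ∫ s in (0)..ρ * N ^ 0, F s ≤ ∫ s in (0)..ρ, b * s := by
          rw [pow_zero, mul_one]
          exact intervalIntegral.integral_mono_on_of_le_Ioo hρ.le (hF.intervalIntegrable _ _)
            ((by fun_prop : Continuous fun s => b * s).intervalIntegrable _ _) h₀
      _ ≤ b * ρ ^ 2 / 2 + 2 * c * A ^ 0 * log N := by
          rw [intervalIntegral.integral_const_mul, integral_id]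
          nlinarith [log_nonneg hN]
  | succ k ih =>
    have hpiece : ∫ s in ρ * N ^ k..ρ * N ^ (k + 1), F s ≤ c * A ^ (k + 1) * log N := by
      rw [pow_succ N, ← mul_assoc]
      refine intervalIntegral_le_mul_log hF (by positivity) hN fun s hs => ?_
      refine hscale (k + 1) le_rfl s ⟨(by positivity : (0 : ℝ) < ρ * N ^ k).trans hs.1, ?_⟩
      rw [pow_succ, ← mul_assoc]
      exact hs.2
    have hgeom : 2 * c * A ^ k * log N ≤ c * A ^ (k + 1) * log N := by
      rw [pow_succ]
      have := mul_nonneg (mul_nonneg hc (pow_nonneg (by linarith : (0 : ℝ) ≤ A) k)) (log_nonneg hN)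
      nlinarith
    rw [← intervalIntegral.integral_add_adjacent_intervals (hF.intervalIntegrable 0 (ρ * N ^ k))
      (hF.intervalIntegrable _ _)]
    linarith [ih fun i hi => hscale i (hi.trans k.le_succ)]

lemma sqQ_eq_Icc (r : ℝ) (z : ℝ × ℝ) :
    sqQ r z = Icc (z.1 - r / 2, z.2 - r / 2) (z.1 + r / 2, z.2 + r / 2) := by
  rw [sqQ, Icc_prod_Icc]

lemma sqQ_subset_sqQ {r r' : ℝ} (h : r ≤ r') (z : ℝ × ℝ) : sqQ r z ⊆ sqQ r' z := by
  unfold sqQ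
  gcongr

lemma sqQ_two_mul_subset (r : ℝ) (z : ℝ × ℝ) :
    sqQ (2 * r) z ⊆ (sqQ r (z.1 - r / 2, z.2 - r / 2) ∪ sqQ r (z.1 + r / 2, z.2 - r / 2)) ∪
      (sqQ r (z.1 - r / 2, z.2 + r / 2) ∪ sqQ r (z.1 + r / 2, z.2 + r / 2)) := by
  intro p hp
  simp only [sqQ, mem_union, mem_prod, mem_Icc] at hp ⊢
  rcases le_total p.1 z.1 with h₁ | h₁ <;> rcases le_total p.2 z.2 with h₂ | h₂
  · exact Or.inl (Or.inl ⟨⟨by linarith, by linarith⟩, by linarith, by linarith⟩)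
  · exact Or.inr (Or.inl ⟨⟨by linarith, by linarith⟩, by linarith, by linarith⟩)
  · exact Or.inl (Or.inr ⟨⟨by linarith, by linarith⟩, by linarith, by linarith⟩)
  · exact Or.inr (Or.inr ⟨⟨by linarith, by linarith⟩, by linarith, by linarith⟩)

lemma isOpen_disc (z : ℝ × ℝ) (r : ℝ) : IsOpen (disc z r) :=
  isOpen_lt (by fun_prop) continuous_const

lemma disc_subset_sqQ (z : ℝ × ℝ) {r : ℝ} (hr : 0 ≤ r) : disc z r ⊆ sqQ (2 * r) z := by
  intro p hp
  simp only [disc, mem_ofPred_eq] at hp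
  have h₁ : (p.1 - z.1) ^ 2 < r ^ 2 := by nlinarith [sq_nonneg (p.2 - z.2)]
  have h₂ : (p.2 - z.2) ^ 2 < r ^ 2 := by nlinarith [sq_nonneg (p.1 - z.1)]
  exact ⟨⟨by nlinarith, by nlinarith⟩, ⟨by nlinarith, by nlinarith⟩⟩

lemma disc_subset_disc_of_mem_sqQ {x y : ℝ × ℝ} {r : ℝ} (hy : y ∈ sqQ r x) :
    disc y r ⊆ disc x (2 * r) := by
  intro p hp
  obtain ⟨⟨hy₁, hy₁'⟩, hy₂, hy₂'⟩ := hy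
  simp only [disc, mem_ofPred_eq] at hp ⊢
  nlinarith [sq_nonneg ((p.1 - y.1) - (y.1 - x.1)), sq_nonneg ((p.2 - y.2) - (y.2 - x.2))]

lemma Continuous.integrableOn_sqQ {g : ℝ × ℝ → ℝ} (hg : Continuous g) (r : ℝ) (z : ℝ × ℝ) :
    IntegrableOn g (sqQ r z) :=
  sqQ_eq_Icc r z ▸ hg.integrableOn_Icc

lemma Continuous.integrableOn_disc {g : ℝ × ℝ → ℝ} (hg : Continuous g) (z : ℝ × ℝ) {r : ℝ}
    (hr : 0 ≤ r) : IntegrableOn g (disc z r) :=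
  (hg.integrableOn_sqQ _ z).mono_set (disc_subset_sqQ z hr)

lemma setIntegral_sqQ_two_mul_le {g : ℝ × ℝ → ℝ} (hgc : Continuous g) (hg : 0 ≤ g) {r M : ℝ}
    (hM : ∀ c, ∫ p in sqQ r c, g p ≤ M) (z : ℝ × ℝ) : ∫ p in sqQ (2 * r) z, g p ≤ 4 * M := by
  set S₁ := sqQ r (z.1 - r / 2, z.2 - r / 2)
  set S₂ := sqQ r (z.1 + r / 2, z.2 - r / 2)
  set S₃ := sqQ r (z.1 - r / 2, z.2 + r / 2)
  set S₄ := sqQ r (z.1 + r / 2, z.2 + r / 2)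
  have hint := hgc.integrableOn_sqQ r
  calc ∫ p in sqQ (2 * r) z, g p ≤ ∫ p in (S₁ ∪ S₂) ∪ (S₃ ∪ S₄), g p :=
        setIntegral_mono_set (((hint _).union (hint _)).union ((hint _).union (hint _)))
          (ae_of_all _ hg) (sqQ_two_mul_subset r z).eventuallyLE
    _ ≤ (∫ p in S₁ ∪ S₂, g p) + ∫ p in S₃ ∪ S₄, g p :=
        setIntegral_union_le hg ((hint _).union (hint _)) ((hint _).union (hint _))
    _ ≤ ((∫ p in S₁, g p) + ∫ p in S₂, g p) + ((∫ p in S₃, g p) + ∫ p in S₄, g p) :=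
        add_le_add (setIntegral_union_le hg (hint _) (hint _))
          (setIntegral_union_le hg (hint _) (hint _))
    _ ≤ 4 * M := by
        linarith [hM (z.1 - r / 2, z.2 - r / 2), hM (z.1 + r / 2, z.2 - r / 2),
          hM (z.1 - r / 2, z.2 + r / 2), hM (z.1 + r / 2, z.2 + r / 2)]

lemma integral_disc_zero_eq_polar {g : ℝ × ℝ → ℝ} (hg : Continuous g) {r : ℝ} (hr : 0 ≤ r) :
    ∫ p in disc 0 r, g p = ∫ t in (0)..r, ∫ θ in (-π)..π, t * g (t • circleDir θ) := by
  set S := Ioo (0 : ℝ) r ×ˢ Ioo (-π) π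
  have hS : S ⊆ polarCoord.target := by
    rw [polarCoord_target]; exact prod_mono Ioo_subset_Ioi_self subset_rfl
  have hsymm (q : ℝ × ℝ) : polarCoord.symm q = q.1 • circleDir q.2 := by
    simp [polarCoord_symm_apply, circleDir, Prod.smul_def]
  have hmem : ∀ q ∈ polarCoord.target, polarCoord.symm q ∈ disc 0 r ↔ q ∈ S := by
    rintro ⟨t, θ⟩ ⟨ht, hθ⟩
    have hnorm : (t * cos θ) ^ 2 + (t * sin θ) ^ 2 = t ^ 2 := by
      linear_combination t ^ 2 * sin_sq_add_cos_sq θ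
    simp only [mem_Ioi] at ht
    simp only [hsymm, disc, mem_ofPred_eq, circleDir, Prod.smul_mk, smul_eq_mul, Prod.fst_zero,
      Prod.snd_zero, sub_zero, hnorm, S, mem_prod, mem_Ioo, ht, true_and, hθ, and_true]
    exact ⟨fun h => by nlinarith, fun h => by nlinarith⟩
  have hint : IntegrableOn (fun q : ℝ × ℝ => q.1 * g (q.1 • circleDir q.2)) S
      (volume.prod volume) := by
    refine (Continuous.integrableOn_Icc (a := ((0 : ℝ), -π)) (b := (r, π)) ?_).mono_set ?_
    · fun_prop
    · rw [← Icc_prod_Icc]; exact prod_mono Ioo_subset_Icc_self Ioo_subset_Icc_self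
  calc ∫ p in disc 0 r, g p = ∫ p, (disc 0 r).indicator g p :=
        (integral_indicator (isOpen_disc 0 r).measurableSet).symm
    _ = ∫ q in polarCoord.target, q.1 • (disc 0 r).indicator g (polarCoord.symm q) :=
        (integral_comp_polarCoord_symm _).symm
    _ = ∫ q in polarCoord.target, S.indicator (fun q => q.1 * g (q.1 • circleDir q.2)) q := by
        refine setIntegral_congr_fun polarCoord.open_target.measurableSet fun q hq => ?_
        by_cases h : q ∈ S
        · rw [indicator_of_mem ((hmem q hq).2 h), indicator_of_mem h, hsymm, smul_eq_mul]
        · rw [indicator_of_notMem (mt (hmem q hq).1 h), indicator_of_notMem h, smul_zero]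
    _ = ∫ t in Ioo 0 r, ∫ θ in Ioo (-π) π, t * g (t • circleDir θ) := by
        rw [setIntegral_indicator (measurableSet_Ioo.prod measurableSet_Ioo),
          inter_eq_right.2 hS, Measure.volume_eq_prod, setIntegral_prod _ hint]
    _ = ∫ t in (0)..r, ∫ θ in (-π)..π, t * g (t • circleDir θ) := by
        simp only [intervalIntegral.integral_of_le hr,
          intervalIntegral.integral_of_le (neg_le_self pi_pos.le), integral_Ioc_eq_integral_Ioo]

lemma integral_disc_eq_polar {g : ℝ × ℝ → ℝ} (hg : Continuous g) (z : ℝ × ℝ) {r : ℝ}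
    (hr : 0 ≤ r) :
    ∫ p in disc z r, g p = ∫ t in (0)..r, ∫ θ in (-π)..π, t * g (z + t • circleDir θ) := by
  have htrans : (z + ·) ⁻¹' disc z r = disc 0 r := by ext p; simp [disc]
  rw [← (measurePreserving_add_left volume z).setIntegral_preimage_emb
    (measurableEmbedding_addLeft z) g, htrans]
  exact integral_disc_zero_eq_polar (g := fun p => g (z + p)) (by fun_prop) hr

lemma integral_disc_const (z : ℝ × ℝ) {s : ℝ} (hs : 0 ≤ s) (c : ℝ) :
    ∫ _ in disc z s, c = c * (π * s ^ 2) := by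
  rw [integral_disc_eq_polar continuous_const z hs]
  simp only [intervalIntegral.integral_const, smul_eq_mul]
  rw [intervalIntegral.integral_const_mul, intervalIntegral.integral_mul_const, integral_id]
  ring

lemma hasDerivAt_circleDir (θ : ℝ) : HasDerivAt circleDir (circleTangent θ) θ :=
  (hasDerivAt_cos θ).prodMk (hasDerivAt_sin θ)

lemma hasDerivAt_circleTangent (θ : ℝ) : HasDerivAt circleTangent (-circleDir θ) θ :=
  ((hasDerivAt_sin θ).neg.prodMk (hasDerivAt_cos θ)).congr_deriv (by simp [circleDir])

section Calculus

variable {E F : Type*} [NormedAddCommGroup E] [NormedSpace ℝ E] [NormedAddCommGroup F]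
  [NormedSpace ℝ F]

lemma ContDiff.differentiable_fderiv {g : E → F} (hg : ContDiff ℝ 2 g) :
    Differentiable ℝ (fderiv ℝ g) :=
  (hg.fderiv_right (m := 1) (by norm_num)).differentiable one_ne_zero

lemma ContDiff.continuous_fderiv_fderiv {g : E → F} (hg : ContDiff ℝ 2 g) :
    Continuous (fderiv ℝ (fderiv ℝ g)) :=
  (hg.fderiv_right (m := 1) (by norm_num)).continuous_fderiv one_ne_zero

lemma fderiv_fderiv_apply_eq {g : E → F} {p : E} (h : DifferentiableAt ℝ (fderiv ℝ g) p)
    (u v : E) :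
    fderiv ℝ (fun q => fderiv ℝ g q v) p u = fderiv ℝ (fderiv ℝ g) p u v := by
  rw [fderiv_clm_apply h (differentiableAt_const v)]
  simp

lemma hasDerivAt_comp_ray {g : ℝ × ℝ → F} (hg : Differentiable ℝ g) (z : ℝ × ℝ) (θ t : ℝ) :
    HasDerivAt (fun s => g (z + s • circleDir θ))
      (fderiv ℝ g (z + t • circleDir θ) (circleDir θ)) t := by
  have hray : HasDerivAt (fun s : ℝ => z + s • circleDir θ) (circleDir θ) t := by
    simpa using ((hasDerivAt_id t).smul_const (circleDir θ)).const_add z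
  exact (hg _).hasFDerivAt.comp_hasDerivAt t hray

lemma hasDerivAt_comp_circle {g : ℝ × ℝ → F} (hg : Differentiable ℝ g) (z : ℝ × ℝ) (t θ : ℝ) :
    HasDerivAt (fun θ => g (z + t • circleDir θ))
      (t • fderiv ℝ g (z + t • circleDir θ) (circleTangent θ)) θ :=
  ((hg _).hasFDerivAt.comp_hasDerivAt θ
    (((hasDerivAt_circleDir θ).const_smul t).const_add z)).congr_deriv (map_smul _ _ _)

end Calculus

section

variable {w : ℝ × ℝ → ℝ}

lemma lap_eq_fderiv_fderiv (hw : ContDiff ℝ 2 w) (p : ℝ × ℝ) :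
    lap w p = fderiv ℝ (fderiv ℝ w) p (1, 0) (1, 0) + fderiv ℝ (fderiv ℝ w) p (0, 1) (0, 1) := by
  have h := hw.differentiable_fderiv p
  unfold lap pdx pdy
  rw [fderiv_fderiv_apply_eq h, fderiv_fderiv_apply_eq h]

lemma continuous_lap (hw : ContDiff ℝ 2 w) : Continuous (lap w) := by
  have := hw.continuous_fderiv_fderiv
  rw [funext (lap_eq_fderiv_fderiv hw)]
  fun_prop

lemma lap_eq_fderiv_fderiv_circleDir (hw : ContDiff ℝ 2 w) (p : ℝ × ℝ) (θ : ℝ) :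
    lap w p = fderiv ℝ (fderiv ℝ w) p (circleDir θ) (circleDir θ)
      + fderiv ℝ (fderiv ℝ w) p (circleTangent θ) (circleTangent θ) := by
  rw [lap_eq_fderiv_fderiv hw, circleDir_eq, circleTangent_eq]
  simp only [map_add, map_smul, add_apply, smul_apply, smul_eq_mul]
  linear_combination (-(fderiv ℝ (fderiv ℝ w) p (1, 0) (1, 0))
    - fderiv ℝ (fderiv ℝ w) p (0, 1) (0, 1)) * sin_sq_add_cos_sq θ

lemma continuous_fderiv_ray (hw : ContDiff ℝ 2 w) (z : ℝ × ℝ) :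
    Continuous fun q : ℝ × ℝ => fderiv ℝ w (z + q.1 • circleDir q.2) (circleDir q.2) := by
  have := hw.continuous_fderiv two_ne_zero
  fun_prop

lemma continuous_circleFlux (hw : ContDiff ℝ 2 w) (z : ℝ × ℝ) : Continuous (circleFlux w z) :=
  intervalIntegral.continuous_parametric_intervalIntegral_of_continuous'
    (continuous_fderiv_ray hw z) _ _

theorem integral_circle_eq_add_integral_circleFlux (hw : ContDiff ℝ 2 w) (z : ℝ × ℝ) {r : ℝ}
    (hr : 0 ≤ r) :
    ∫ θ in (-π)..π, w (z + r • circleDir θ) = 2 * π * w z + ∫ s in (0)..r, circleFlux w z s := by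
  have hcirc : Continuous fun θ => w (z + r • circleDir θ) := by
    have := hw.continuous; fun_prop
  have hflux : ∫ s in (0)..r, circleFlux w z s = ∫ θ in (-π)..π, (w (z + r • circleDir θ) - w z) :=
    calc ∫ s in (0)..r, circleFlux w z s
        = ∫ θ in (-π)..π, ∫ s in (0)..r, fderiv ℝ w (z + s • circleDir θ) (circleDir θ) :=
          intervalIntegral_integral_swap (continuous_fderiv_ray hw z) hr (neg_le_self pi_pos.le)
      _ = ∫ θ in (-π)..π, (w (z + r • circleDir θ) - w z) := by
          refine intervalIntegral.integral_congr fun θ _ => ?_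
          have hray := (continuous_fderiv_ray hw z).comp₂ continuous_id (continuous_const (y := θ))
          simpa using intervalIntegral.integral_eq_sub_of_hasDerivAt (a := 0) (b := r)
            (fun t _ => hasDerivAt_comp_ray (hw.differentiable two_ne_zero) z θ t)
            (hray.intervalIntegrable _ _)
  rw [hflux, intervalIntegral.integral_sub (hcirc.intervalIntegrable _ _) intervalIntegrable_const,
    intervalIntegral.integral_const, smul_eq_mul]
  ring

lemma integral_radial_deriv (hw : ContDiff ℝ 2 w) (z : ℝ × ℝ) (θ s : ℝ) :
    ∫ t in (0)..s, (fderiv ℝ w (z + t • circleDir θ) (circleDir θ)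
      + t * fderiv ℝ (fderiv ℝ w) (z + t • circleDir θ) (circleDir θ) (circleDir θ))
      = s * fderiv ℝ w (z + s • circleDir θ) (circleDir θ) := by
  have := hw.continuous_fderiv_fderiv
  have := hw.continuous_fderiv two_ne_zero
  simpa using intervalIntegral.integral_eq_sub_of_hasDerivAt (a := 0) (b := s)
    (f := fun t => t * fderiv ℝ w (z + t • circleDir θ) (circleDir θ))
    (fun t _ => (hasDerivAt_id t).mul
      ((hasDerivAt_comp_ray hw.differentiable_fderiv z θ t).clm_apply
        (hasDerivAt_const t (circleDir θ))) |>.congr_deriv (by simp))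
    (Continuous.intervalIntegrable (by fun_prop) _ _)

lemma integral_angular_deriv_eq_zero (hw : ContDiff ℝ 2 w) (z : ℝ × ℝ) (t : ℝ) :
    ∫ θ in (-π)..π, (t * fderiv ℝ (fderiv ℝ w) (z + t • circleDir θ) (circleTangent θ)
      (circleTangent θ) - fderiv ℝ w (z + t • circleDir θ) (circleDir θ)) = 0 := by
  have := hw.continuous_fderiv_fderiv
  have := hw.continuous_fderiv two_ne_zero
  rw [intervalIntegral.integral_eq_sub_of_hasDerivAt
    (f := fun θ => fderiv ℝ w (z + t • circleDir θ) (circleTangent θ))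
    (fun θ _ => ((hasDerivAt_comp_circle hw.differentiable_fderiv z t θ).clm_apply
      (hasDerivAt_circleTangent θ)).congr_deriv (by simp; ring))
    (Continuous.intervalIntegrable (by fun_prop) _ _)]
  simp [circleDir, circleTangent]

theorem mul_circleFlux_eq_integral_lap (hw : ContDiff ℝ 2 w) (z : ℝ × ℝ) {s : ℝ} (hs : 0 ≤ s) :
    s * circleFlux w z s = ∫ p in disc z s, lap w p := by
  -- in polar coordinates `t Δw = ∂ₜ(t ∂ᵣw) + ∂_θ(∂_τ w)`, and the second term has zero integral
  -- over a period
  have := hw.continuous_fderiv_fderiv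
  have := hw.continuous_fderiv two_ne_zero
  set D : ℝ × ℝ → ℝ := fun q => fderiv ℝ w (z + q.1 • circleDir q.2) (circleDir q.2)
    + q.1 * fderiv ℝ (fderiv ℝ w) (z + q.1 • circleDir q.2) (circleDir q.2) (circleDir q.2)
    with hD
  have hDc : Continuous D := by fun_prop
  rw [integral_disc_eq_polar (continuous_lap hw) z hs]
  calc s * circleFlux w z s = ∫ θ in (-π)..π, ∫ t in (0)..s, D (t, θ) := by
        rw [circleFlux, ← intervalIntegral.integral_const_mul]
        exact intervalIntegral.integral_congr fun θ _ => (integral_radial_deriv hw z θ s).symm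
    _ = ∫ t in (0)..s, ∫ θ in (-π)..π, D (t, θ) :=
        (intervalIntegral_integral_swap hDc hs (neg_le_self pi_pos.le)).symm
    _ = ∫ t in (0)..s, ∫ θ in (-π)..π, t * lap w (z + t • circleDir θ) := by
        refine intervalIntegral.integral_congr fun t _ => ?_
        rw [← add_zero (∫ θ in (-π)..π, D (t, θ)), ← integral_angular_deriv_eq_zero hw z t,
          ← intervalIntegral.integral_add (Continuous.intervalIntegrable (by fun_prop) _ _)
            (Continuous.intervalIntegrable (by fun_prop) _ _)]
        refine intervalIntegral.integral_congr fun θ _ => ?_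
        simp only [hD, lap_eq_fderiv_fderiv_circleDir hw _ θ]
        ring

lemma abs_circleFlux_le (hw : ContDiff ℝ 2 w) {M : ℝ} (hM : ∀ p, |lap w p| ≤ M) (z : ℝ × ℝ)
    {s : ℝ} (hs : 0 < s) : |circleFlux w z s| ≤ M * π * s := by
  have h : s * |circleFlux w z s| ≤ s * (M * π * s) :=
    calc s * |circleFlux w z s| = |∫ p in disc z s, lap w p| := by
          rw [← mul_circleFlux_eq_integral_lap hw z hs.le, abs_mul, abs_of_pos hs]
      _ ≤ ∫ p in disc z s, |lap w p| := abs_integral_le_integral_abs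
      _ ≤ ∫ _ in disc z s, M :=
          setIntegral_mono_on ((continuous_lap hw).abs.integrableOn_disc z hs.le)
            (continuous_const.integrableOn_disc z hs.le) (isOpen_disc z s).measurableSet
            fun p _ => hM p
      _ = s * (M * π * s) := by rw [integral_disc_const z hs.le]; ring
  exact le_of_mul_le_mul_left h hs

lemma abs_circleFlux_le_of_sqQ (hw : ContDiff ℝ 2 w) {L M : ℝ}
    (hM : ∀ c, ∫ p in sqQ L c, |lap w p| ≤ M) (z : ℝ × ℝ) {s : ℝ} (hs : 0 < s)
    (hsL : s ≤ 2 * L) : |circleFlux w z s| ≤ 16 * M / s := by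
  have hlap := (continuous_lap hw).abs
  have hlap₀ : 0 ≤ fun p => |lap w p| := fun p => abs_nonneg _
  have hsq : disc z s ⊆ sqQ (2 * (2 * L)) z :=
    (disc_subset_sqQ z hs.le).trans (sqQ_subset_sqQ (by linarith) z)
  have h : s * |circleFlux w z s| ≤ 16 * M :=
    calc s * |circleFlux w z s| = |∫ p in disc z s, lap w p| := by
          rw [← mul_circleFlux_eq_integral_lap hw z hs.le, abs_mul, abs_of_pos hs]
      _ ≤ ∫ p in disc z s, |lap w p| := abs_integral_le_integral_abs
      _ ≤ ∫ p in sqQ (2 * (2 * L)) z, |lap w p| :=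
          setIntegral_mono_set (hlap.integrableOn_sqQ _ z) (ae_of_all _ hlap₀) hsq.eventuallyLE
      _ ≤ 4 * (4 * M) :=
          setIntegral_sqQ_two_mul_le hlap hlap₀ (setIntegral_sqQ_two_mul_le hlap hlap₀ hM) z
      _ = 16 * M := by ring
  rwa [le_div_iff₀ hs, mul_comm]

lemma abs_integral_disc_sub_le (hw : ContDiff ℝ 2 w) (z : ℝ × ℝ) {R E : ℝ} (hR : 0 ≤ R)
    (hE : ∀ r ∈ Icc 0 R, |∫ s in (0)..r, circleFlux w z s| ≤ E) :
    |(∫ p in disc z R, w p) - π * R ^ 2 * w z| ≤ E * R ^ 2 / 2 := by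
  have hprim : Continuous fun t => ∫ s in (0)..t, circleFlux w z s :=
    intervalIntegral.continuous_primitive
      (fun a b => (continuous_circleFlux hw z).intervalIntegrable a b) 0
  have hpolar : ∫ p in disc z R, w p
      = π * R ^ 2 * w z + ∫ t in (0)..R, t * ∫ s in (0)..t, circleFlux w z s :=
    calc ∫ p in disc z R, w p = ∫ t in (0)..R, ∫ θ in (-π)..π, t * w (z + t • circleDir θ) :=
          integral_disc_eq_polar hw.continuous z hR
      _ = ∫ t in (0)..R, (2 * π * w z * t + t * ∫ s in (0)..t, circleFlux w z s) := by
          refine intervalIntegral.integral_congr fun t ht => ?_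
          rw [uIcc_of_le hR] at ht
          simp only [intervalIntegral.integral_const_mul,
            integral_circle_eq_add_integral_circleFlux hw z ht.1]
          ring
      _ = π * R ^ 2 * w z + ∫ t in (0)..R, t * ∫ s in (0)..t, circleFlux w z s := by
          rw [intervalIntegral.integral_add (Continuous.intervalIntegrable (by fun_prop) _ _)
            (Continuous.intervalIntegrable (by fun_prop) _ _), intervalIntegral.integral_const_mul,
            integral_id]
          ring
  rw [hpolar, add_sub_cancel_left]
  calc |∫ t in (0)..R, t * ∫ s in (0)..t, circleFlux w z s| ≤ ∫ t in (0)..R, t * E := by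
        rw [← Real.norm_eq_abs]
        refine intervalIntegral.norm_integral_le_of_norm_le hR (ae_of_all _ fun t ht => ?_)
          ((continuous_mul_const E).intervalIntegrable _ _)
        rw [Real.norm_eq_abs, abs_mul, abs_of_pos ht.1]
        exact mul_le_mul_of_nonneg_left (hE t ⟨ht.1.le, ht.2⟩) ht.1.le
    _ = E * R ^ 2 / 2 := by
        rw [intervalIntegral.integral_mul_const, integral_id]
        ring

theorem abs_integral_circleFlux_le (hw : ContDiff ℝ 2 w) (hlap : ∀ p, |lap w p| ≤ 1) {N A : ℝ}
    (hN : 1 ≤ N) (hA : 2 ≤ A) {k : ℕ}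
    (hsq : ∀ i ≤ k, ∀ c, ∫ p in sqQ (N ^ i) c, |lap w p| ≤ A ^ i) (z : ℝ × ℝ) :
    ∀ r ∈ Icc 0 (2 * N ^ k), |∫ s in (0)..r, circleFlux w z s| ≤ 2 * π + 32 * A ^ k * log N := by
  intro r hr
  have hF := (continuous_circleFlux hw z).abs
  have htotal := intervalIntegral_le_of_scale_bounds hF two_pos hN hA (by norm_num : (0 : ℝ) ≤ 16)
    k (b := π) (fun s hs => by simpa using abs_circleFlux_le hw hlap z hs.1)
    (fun i hi s hs => abs_circleFlux_le_of_sqQ hw (hsq i hi) z hs.1 hs.2.le)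
  calc |∫ s in (0)..r, circleFlux w z s| ≤ ∫ s in (0)..r, |circleFlux w z s| :=
        intervalIntegral.abs_integral_le_integral_abs hr.1
    _ ≤ ∫ s in (0)..2 * N ^ k, |circleFlux w z s| :=
        intervalIntegral.integral_mono_interval le_rfl hr.1 hr.2
          (ae_of_all _ fun _ => abs_nonneg _) (hF.intervalIntegrable _ _)
    _ ≤ 2 * π + 32 * A ^ k * log N := by linarith

theorem le_four_mul_add_of_circleFlux_bound (hw : ContDiff ℝ 2 w) (hw₀ : ∀ p, 0 ≤ w p)
    {x y : ℝ × ℝ} {R E : ℝ} (hR : 0 < R) (hy : y ∈ sqQ R x)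
    (hE : ∀ z, ∀ r ∈ Icc 0 (2 * R), |∫ s in (0)..r, circleFlux w z s| ≤ E) :
    w y ≤ 4 * w x + E := by
  have hy' := abs_le.1 <| abs_integral_disc_sub_le hw y hR.le fun r hr =>
    hE y r ⟨hr.1, by linarith [hr.2]⟩
  have hx' := abs_le.1 <| abs_integral_disc_sub_le hw x (by positivity) (hE x)
  have hmono : ∫ p in disc y R, w p ≤ ∫ p in disc x (2 * R), w p :=
    setIntegral_mono_set (hw.continuous.integrableOn_disc x (by positivity)) (ae_of_all _ hw₀)
      (disc_subset_disc_of_mem_sqQ hy).eventuallyLE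
  have hE₀ : 0 ≤ E := (abs_nonneg _).trans (hE x 0 ⟨le_rfl, by positivity⟩)
  have h : π * R ^ 2 * (w y - 4 * w x) ≤ π * R ^ 2 * E := by
    nlinarith [pi_gt_three, mul_nonneg hE₀ (sq_nonneg R)]
  linarith [le_of_mul_le_mul_left h (by positivity)]

end

theorem stmt11 :
    ∃ C : ℝ, 0 < C ∧ ∀ (N : ℕ), Odd N → 3 ≤ N → ∀ σ : ℝ,
      2 / (N : ℝ) ^ 2 < σ → σ < 1 → ∀ (k : ℕ) (w f : ℝ × ℝ → ℝ),
      ContDiff ℝ 2 w → (∀ p, 0 ≤ w p) → (∀ p, lap w p = f p) →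
      (∀ p, |f p| ≤ 1) →
      (∀ x : ℝ × ℝ, ∀ i : ℕ, i ≤ k →
        (1 / (N : ℝ) ^ (2 * i)) * ∫ y in sqQ ((N : ℝ) ^ i) x, |f y| ≤ σ ^ i) →
      ∀ x y : ℝ × ℝ, y ∈ sqQ ((N : ℝ) ^ k) x →
        w y ≤ C * (w x + (N : ℝ) ^ (2 * k) * σ ^ k * Real.log N) := by
  refine ⟨40, by norm_num, ?_⟩
  intro N _ hN3 σ hσ _ k w f hw hw₀ hf hf₁ hsq x y hy
  obtain rfl : lap w = f := funext hf
  have hN : (3 : ℝ) ≤ N := by exact_mod_cast hN3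
  have hA : 2 ≤ (N : ℝ) ^ 2 * σ := by
    rw [div_lt_iff₀ (by positivity)] at hσ
    linarith
  have hsqA (i : ℕ) (hi : i ≤ k) (c : ℝ × ℝ) :
      ∫ p in sqQ ((N : ℝ) ^ i) c, |lap w p| ≤ ((N : ℝ) ^ 2 * σ) ^ i := by
    have := hsq c i hi
    rwa [one_div, inv_mul_le_iff₀ (by positivity), pow_mul, ← mul_pow] at this
  have hlog : 1 ≤ log N := (le_log_iff_exp_le (by linarith)).2 (by linarith [exp_one_lt_d9])
  have hX : 1 ≤ ((N : ℝ) ^ 2 * σ) ^ k * log N :=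
    one_le_mul_of_one_le_of_one_le (one_le_pow₀ (by linarith)) hlog
  have hwy := le_four_mul_add_of_circleFlux_bound hw hw₀ (pow_pos (by linarith) k) hy
    (abs_integral_circleFlux_le hw hf₁ (by linarith) hA hsqA)
  rw [pow_mul, ← mul_pow]
  nlinarith [hw₀ x, pi_le_four]
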